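/- arXiv:1205.6536 — 9 statements merged into one kernel-verified Lean document; each statement's English description precedes it below -/
import Mathlib

section
/- Let A be an n×n complex matrix with Av = λ₀v for some nonzero vector v, and let r be a vector with rᵀv = 1. Then for any scalar λ₁, the characteristic polynomial of Â = A + (λ₁ − λ₀)·v·rᵀ equals the characteristic polynomial of A multiplied by (λ₁ − x)/(λ₀ − x); equivalently, the eigenvalues of Â (with multiplicity) are those of A except that one occurrence of λ₀ is replaced by λ₁. -/
/-!
Over `R[X]` put `M = X • 1 - A`. Since `M v = (X - a) v`, one has
`M * ((X - a) • 1 - v wᵀ) = (X - a) • (M - v wᵀ)`, and the middle factor is the characteristic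
matrix of the rank-one perturbation `a • 1 + v wᵀ` of a scalar matrix, whose characteristic
polynomial times `X - a` is `(X - a) ^ n * (X - a - w ⬝ v)`. Taking determinants and cancelling
the monic factor `(X - a) ^ n` gives the identity over any commutative ring.
-/

open Matrix Polynomial

namespace Matrix

variable {n R : Type*} [Fintype n] [DecidableEq n] [CommRing R]

theorem charpoly_vecMulVec_mul_X (u w : n → R) :
    (vecMulVec u w).charpoly * X = X ^ Fintype.card n * (X - C (u ⬝ᵥ w)) := by
  rcases isEmpty_or_nonempty n with hn | hn
  · simp
  · rw [charpoly_vecMulVec, smul_eq_C_mul, sub_mul, mul_assoc, ← pow_succ, ← pow_succ,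
      Nat.sub_add_cancel Fintype.card_pos]
    ring

theorem charpoly_scalar_add_vecMulVec_mul_X_sub_C (a : R) (u w : n → R) :
    (scalar n a + vecMulVec u w).charpoly * (X - C a)
      = (X - C a) ^ Fintype.card n * (X - C a - C (u ⬝ᵥ w)) := by
  have h := congrArg (·.comp (X - C a)) (charpoly_vecMulVec_mul_X u w)
  simp only [mul_comp, pow_comp, sub_comp, X_comp, C_comp] at h
  rwa [add_comm, ← sub_neg_eq_add, ← map_neg, charpoly_sub_scalar, map_neg, ← sub_eq_add_neg]

theorem mul_smul_one_sub_vecMulVec {S : Type*} [CommRing S] {M : Matrix n n S} {t : S}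
    {v : n → S} (hv : M *ᵥ v = t • v) (w : n → S) :
    M * (t • 1 - vecMulVec v w) = t • (M - vecMulVec v w) := by
  rw [Matrix.mul_sub, mul_vecMulVec, hv, smul_vecMulVec, Matrix.mul_smul, Matrix.mul_one, smul_sub]

theorem charmatrix_mulVec_of_mulVec_eq_smul {A : Matrix n n R} {v : n → R} {a : R}
    (hAv : A *ᵥ v = a • v) : charmatrix A *ᵥ (C ∘ v) = (X - C a) • (C ∘ v) := by
  ext i
  have := RingHom.map_mulVec C A v i
  simp_all [charmatrix, sub_mulVec, sub_mul]

theorem charmatrix_add_vecMulVec (A : Matrix n n R) (v w : n → R) :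
    charmatrix (A + vecMulVec v w) = charmatrix A - vecMulVec (C ∘ v) (C ∘ w) := by
  ext i j : 1
  simp [charmatrix_apply, vecMulVec_apply]
  ring

theorem charmatrix_scalar_add_vecMulVec (a : R) (v w : n → R) :
    charmatrix (scalar n a + vecMulVec v w) = (X - C a) • 1 - vecMulVec (C ∘ v) (C ∘ w) := by
  ext i j : 1
  rcases eq_or_ne i j with rfl | h
  · simp [vecMulVec_apply]
    ring
  · simp [vecMulVec_apply, h]

theorem charpoly_add_vecMulVec_mul_X_sub_C {A : Matrix n n R} {v : n → R} {a : R}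
    (hAv : A *ᵥ v = a • v) (w : n → R) :
    (A + vecMulVec v w).charpoly * (X - C a) = A.charpoly * (X - C (a + w ⬝ᵥ v)) := by
  have hdet : A.charpoly * (scalar n a + vecMulVec v w).charpoly
      = (X - C a) ^ Fintype.card n * (A + vecMulVec v w).charpoly := by
    have h := congrArg det
      (mul_smul_one_sub_vecMulVec (charmatrix_mulVec_of_mulVec_eq_smul hAv) (C ∘ w))
    rwa [det_mul, det_smul, ← charmatrix_add_vecMulVec,
      ← charmatrix_scalar_add_vecMulVec] at h
  apply ((monic_X_sub_C a).pow (Fintype.card n)).isRegular.left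
  calc (X - C a) ^ Fintype.card n * ((A + vecMulVec v w).charpoly * (X - C a))
      = A.charpoly * ((scalar n a + vecMulVec v w).charpoly * (X - C a)) := by
        rw [← mul_assoc, ← hdet, mul_assoc]
    _ = (X - C a) ^ Fintype.card n * (A.charpoly * (X - C (a + w ⬝ᵥ v))) := by
        rw [charpoly_scalar_add_vecMulVec_mul_X_sub_C, map_add, dotProduct_comm]
        ring

end Matrix

theorem brauer_charpoly_general {n : ℕ} (A : Matrix (Fin n) (Fin n) ℂ)
    (v r : Fin n → ℂ) (lam0 lam1 : ℂ)
    (hAv : A.mulVec v = lam0 • v)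
    (hrv : dotProduct r v = 1) :
    (A + (lam1 - lam0) • Matrix.vecMulVec v r).charpoly * (X - C lam0)
      = A.charpoly * (X - C lam1) := by
  rw [← vecMulVec_smul, charpoly_add_vecMulVec_mul_X_sub_C hAv, smul_dotProduct, hrv, smul_eq_mul,
    mul_one, add_sub_cancel]

/-- Brauer's theorem (characteristic polynomial form): shifting a single
eigenvalue `λ₀` to `λ₁` by the rank-one update `(λ₁ - λ₀) v rᵀ`. -/
theorem brauer_charpoly {n : ℕ} (A : Matrix (Fin n) (Fin n) ℂ)
    (v r : Fin n → ℂ) (lam0 lam1 : ℂ)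
    (hv : v ≠ 0) (hAv : A.mulVec v = lam0 • v)
    (hrv : dotProduct r v = 1) :
    (A + (lam1 - lam0) • Matrix.vecMulVec v r).charpoly * (X - C lam0)
      = A.charpoly * (X - C lam1) :=
  brauer_charpoly_general A v r lam0 lam1 hAv hrv
end

section
/- Let A ∈ ℂ^{n×n} and λ an eigenvalue of A. Suppose u₁,…,u_p is a left Jordan chain for λ and v₁,…,v_q is a right Jordan chain for λ. Then u_i*v_j = 0 whenever 2 ≤ i + j ≤ max(p,q). -/
/-!
Evaluating `uᵢ₊₁* A vⱼ₊₁` in two ways gives `uᵢ₊₁* vⱼ = uᵢ* vⱼ₊₁`, once both chains are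
extended by `u₀ = v₀ = 0` (which turns the eigenvector equations into chain steps). So the
pairing `uᵢ* vⱼ` is constant along each antidiagonal `i + j = k`, and for `k ≤ max p q` the
antidiagonal can be followed, inside the index box, to an entry with `i = 0` or `j = 0`.
-/

open Matrix

section ChainPairing

variable {m R : Type*} [Fintype m] [CommRing R]

theorem dotProduct_eq_of_chain_step {A : Matrix m m R} {lam : R} {x x' y y' : m → R}
    (hx : x' ᵥ* A = lam • x' + x) (hy : A *ᵥ y' = lam • y' + y) :
    x' ⬝ᵥ y = x ⬝ᵥ y' := by
  have h := dotProduct_mulVec x' A y'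
  rw [hx, hy] at h
  simp only [dotProduct_add, add_dotProduct, dotProduct_smul, smul_dotProduct] at h
  exact add_left_cancel h

end ChainPairing

theorem chain_step_update_zero {M S : Type*} [AddZeroClass M] [SMul S M] (T : M → M) {c : S}
    (f : ℕ → M) {p : ℕ} (h1 : T (f 1) = c • f 1)
    (hstep : ∀ i, 1 ≤ i → i + 1 ≤ p → T (f (i + 1)) = c • f (i + 1) + f i) :
    ∀ i < p, T (Function.update f 0 0 (i + 1)) =
      c • Function.update f 0 0 (i + 1) + Function.update f 0 0 i := by
  rintro (_ | i) hi
  · simp [h1]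
  · simp [hstep (i + 1) (by omega) (by omega)]

section AntidiagonalShift

variable {α : Type*} [Zero α] {p q : ℕ} {S : ℕ → ℕ → α}

theorem eq_zero_of_shift_of_add_le_left (hshift : ∀ i j, i < p → j < q → S (i + 1) j = S i (j + 1))
    (hcol : ∀ i, S i 0 = 0) {i j : ℕ} (hij : i + j ≤ p) (hj : j ≤ q) : S i j = 0 := by
  induction j generalizing i with
  | zero => exact hcol i
  | succ j ih =>
    rw [← hshift i j (by omega) (by omega)]
    exact ih (by omega) (by omega)

theorem eq_zero_of_shift (hshift : ∀ i j, i < p → j < q → S (i + 1) j = S i (j + 1))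
    (hrow : ∀ j, S 0 j = 0) (hcol : ∀ i, S i 0 = 0) {i j : ℕ} (hi : i ≤ p) (hj : j ≤ q)
    (hij : i + j ≤ max p q) : S i j = 0 := by
  rcases le_max_iff.mp hij with hp | hq
  · exact eq_zero_of_shift_of_add_le_left hshift hcol hp hj
  · rw [add_comm] at hq
    exact eq_zero_of_shift_of_add_le_left (S := fun j i => S i j)
      (fun j i hj hi => (hshift i j hi hj).symm) hrow hq hi

end AntidiagonalShift

theorem generalized_biorthogonality_vanish_general {n p q : ℕ}
    (A : Matrix (Fin n) (Fin n) ℂ) (lam : ℂ)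
    (u v : ℕ → Fin n → ℂ)
    (hu1 : Matrix.vecMul (star (u 1)) A = lam • star (u 1))
    (huS : ∀ i, 1 ≤ i → i + 1 ≤ p →
      Matrix.vecMul (star (u (i + 1))) A = lam • star (u (i + 1)) + star (u i))
    (hv1 : A.mulVec (v 1) = lam • v 1)
    (hvS : ∀ j, 1 ≤ j → j + 1 ≤ q →
      A.mulVec (v (j + 1)) = lam • v (j + 1) + v j) :
    ∀ i j, 1 ≤ i → i ≤ p → 1 ≤ j → j ≤ q → i + j ≤ max p q →
      dotProduct (star (u i)) (v j) = 0 := by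
  set x := Function.update (fun k => star (u k)) 0 0
  set y := Function.update v 0 0
  have hx := chain_step_update_zero (· ᵥ* A) (fun k => star (u k)) hu1 huS
  have hy := chain_step_update_zero (A *ᵥ ·) v hv1 hvS
  intro i j hi hip hj hjq hij
  have h := eq_zero_of_shift (S := fun k l => x k ⬝ᵥ y l)
    (fun k l hk hl => dotProduct_eq_of_chain_step (hx k hk) (hy l hl))
    (by simp [x]) (by simp [y]) hip hjq hij
  simpa [x, y, Function.update_of_ne (Nat.one_le_iff_ne_zero.mp hi),
    Function.update_of_ne (Nat.one_le_iff_ne_zero.mp hj)] using h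

/-- Generalized biorthogonality, same eigenvalue: `uᵢ* vⱼ = 0` for
`2 ≤ i + j ≤ max p q`. -/
theorem generalized_biorthogonality_vanish {n p q : ℕ}
    (A : Matrix (Fin n) (Fin n) ℂ) (lam : ℂ)
    (u v : ℕ → Fin n → ℂ)
    (hp : 1 ≤ p) (hq : 1 ≤ q)
    (hu0 : u 1 ≠ 0) (hv0 : v 1 ≠ 0)
    (hu1 : Matrix.vecMul (star (u 1)) A = lam • star (u 1))
    (huS : ∀ i, 1 ≤ i → i + 1 ≤ p →
      Matrix.vecMul (star (u (i + 1))) A = lam • star (u (i + 1)) + star (u i))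
    (hv1 : A.mulVec (v 1) = lam • v 1)
    (hvS : ∀ j, 1 ≤ j → j + 1 ≤ q →
      A.mulVec (v (j + 1)) = lam • v (j + 1) + v j) :
    ∀ i j, 1 ≤ i → i ≤ p → 1 ≤ j → j ≤ q → i + j ≤ max p q →
      dotProduct (star (u i)) (v j) = 0 :=
  generalized_biorthogonality_vanish_general A lam u v hu1 huS hv1 hvS
end

section
/- Let A ∈ ℂ^{n×n}, λ an eigenvalue, and let u₁,…,u_p and v₁,…,v_q be left and right Jordan chains for λ with p and q both even. Then u_i*v_j = 0 for all 1 ≤ i ≤ p/2 and 1 ≤ j ≤ q/2. -/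
open Matrix

/-!
Write `fᵢⱼ = uᵢ* vⱼ`. Evaluating `u_{i+1}* A v_{j+1}` in two ways gives `f_{i,j+1} = f_{i+1,j}`,
so `fᵢⱼ` depends only on `i + j`, and the same computation with `u₁* A = λ u₁*` (or `A v₁ = λ v₁`)
shows that it vanishes as long as `i + j ≤ max p q`, which holds when `2i ≤ p` and `2j ≤ q`.
-/

namespace Matrix

variable {m R : Type*} [Fintype m] [CommRing R] {A : Matrix m m R} {lam : R}

theorem dotProduct_eq_of_jordan_step {x x' y y' : m → R}
    (hx : x' ᵥ* A = lam • x' + x) (hy : A *ᵥ y' = lam • y' + y) :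
    x ⬝ᵥ y' = x' ⬝ᵥ y := by
  have h := dotProduct_mulVec x' A y'
  rw [hx, hy, dotProduct_add, add_dotProduct, dotProduct_smul, smul_dotProduct] at h
  exact (add_left_cancel h).symm

theorem dotProduct_eq_zero_of_vecMul_eq_smul {x' y y' : m → R}
    (hx : x' ᵥ* A = lam • x') (hy : A *ᵥ y' = lam • y' + y) :
    x' ⬝ᵥ y = 0 := by
  simpa using (dotProduct_eq_of_jordan_step (x := 0) (by simpa using hx) hy).symm

section Chains

variable {p q : ℕ} {x y : ℕ → m → R}

theorem dotProduct_jordan_chain_shift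
    (hx : ∀ i, 1 ≤ i → i + 1 ≤ p → x (i + 1) ᵥ* A = lam • x (i + 1) + x i)
    (hy : ∀ j, 1 ≤ j → j + 1 ≤ q → A *ᵥ y (j + 1) = lam • y (j + 1) + y j) (k : ℕ) :
    ∀ i j, 1 ≤ i → i + k ≤ p → 1 ≤ j → j + k ≤ q → x (i + k) ⬝ᵥ y j = x i ⬝ᵥ y (j + k) := by
  induction k with
  | zero => intros; rfl
  | succ k ih =>
    intro i j hi hip hj hjq
    calc x (i + (k + 1)) ⬝ᵥ y j = x (i + k) ⬝ᵥ y (j + 1) :=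
          (dotProduct_eq_of_jordan_step (hx (i + k) (by omega) (by omega)) (hy j hj (by omega))).symm
      _ = x i ⬝ᵥ y (j + 1 + k) := ih i (j + 1) hi (by omega) (by omega) (by omega)
      _ = x i ⬝ᵥ y (j + (k + 1)) := by rw [Nat.add_right_comm, Nat.add_assoc]

theorem dotProduct_jordan_chain_eq_zero_of_vecMul_eq_smul
    (hx1 : x 1 ᵥ* A = lam • x 1)
    (hx : ∀ i, 1 ≤ i → i + 1 ≤ p → x (i + 1) ᵥ* A = lam • x (i + 1) + x i)
    (hy : ∀ j, 1 ≤ j → j + 1 ≤ q → A *ᵥ y (j + 1) = lam • y (j + 1) + y j)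
    {i j : ℕ} (hi : 1 ≤ i) (hip : i ≤ p) (hj : 1 ≤ j) (hijq : i + j ≤ q) :
    x i ⬝ᵥ y j = 0 := by
  obtain ⟨k, rfl⟩ : ∃ k, i = 1 + k := ⟨i - 1, by omega⟩
  rw [dotProduct_jordan_chain_shift hx hy k 1 j le_rfl hip hj (by omega)]
  exact dotProduct_eq_zero_of_vecMul_eq_smul hx1 (hy (j + k) (by omega) (by omega))

theorem dotProduct_jordan_chain_eq_zero_of_mulVec_eq_smul
    (hy1 : A *ᵥ y 1 = lam • y 1)
    (hx : ∀ i, 1 ≤ i → i + 1 ≤ p → x (i + 1) ᵥ* A = lam • x (i + 1) + x i)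
    (hy : ∀ j, 1 ≤ j → j + 1 ≤ q → A *ᵥ y (j + 1) = lam • y (j + 1) + y j)
    {i j : ℕ} (hi : 1 ≤ i) (hj : 1 ≤ j) (hjq : j ≤ q) (hijp : i + j ≤ p) :
    x i ⬝ᵥ y j = 0 := by
  simp only [← vecMul_transpose] at hy1 hy
  simp only [← mulVec_transpose] at hx
  rw [dotProduct_comm]
  exact dotProduct_jordan_chain_eq_zero_of_vecMul_eq_smul hy1 hy hx hj hjq hi (by omega)

end Chains

end Matrix

theorem biorthogonality_even_general {n p q : ℕ}
    (A : Matrix (Fin n) (Fin n) ℂ) (lam : ℂ)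
    (u v : ℕ → Fin n → ℂ)
    (hu1 : Matrix.vecMul (star (u 1)) A = lam • star (u 1))
    (huS : ∀ i, 1 ≤ i → i + 1 ≤ p →
      Matrix.vecMul (star (u (i + 1))) A = lam • star (u (i + 1)) + star (u i))
    (hv1 : A.mulVec (v 1) = lam • v 1)
    (hvS : ∀ j, 1 ≤ j → j + 1 ≤ q →
      A.mulVec (v (j + 1)) = lam • v (j + 1) + v j) :
    ∀ i j, 1 ≤ i → 2 * i ≤ p → 1 ≤ j → 2 * j ≤ q →
      dotProduct (star (u i)) (v j) = 0 := by
  intro i j hi hip hj hjq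
  rcases le_total p q with hpq | hqp
  · exact dotProduct_jordan_chain_eq_zero_of_vecMul_eq_smul (x := fun i => star (u i))
      hu1 huS hvS hi (by omega) hj (by omega)
  · exact dotProduct_jordan_chain_eq_zero_of_mulVec_eq_smul (x := fun i => star (u i))
      hv1 huS hvS hi hj (by omega) (by omega)

/-- Corollary (even case): for `p`, `q` even, `uᵢ* vⱼ = 0` for
`1 ≤ i ≤ p/2`, `1 ≤ j ≤ q/2`. -/
theorem biorthogonality_even {n p q : ℕ}
    (A : Matrix (Fin n) (Fin n) ℂ) (lam : ℂ)
    (u v : ℕ → Fin n → ℂ)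
    (hp : 1 ≤ p) (hq : 1 ≤ q) (hpe : Even p) (hqe : Even q)
    (hu0 : u 1 ≠ 0) (hv0 : v 1 ≠ 0)
    (hu1 : Matrix.vecMul (star (u 1)) A = lam • star (u 1))
    (huS : ∀ i, 1 ≤ i → i + 1 ≤ p →
      Matrix.vecMul (star (u (i + 1))) A = lam • star (u (i + 1)) + star (u i))
    (hv1 : A.mulVec (v 1) = lam • v 1)
    (hvS : ∀ j, 1 ≤ j → j + 1 ≤ q →
      A.mulVec (v (j + 1)) = lam • v (j + 1) + v j) :
    ∀ i j, 1 ≤ i → 2 * i ≤ p → 1 ≤ j → 2 * j ≤ q →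
      dotProduct (star (u i)) (v j) = 0 :=
  biorthogonality_even_general A lam u v hu1 huS hv1 hvS
end

section
/- Let A ∈ ℂ^{n×n}, λ an eigenvalue, and let u₁,…,u_p and v₁,…,v_q be left and right Jordan chains for λ with p and q both odd. Then u_i*v_j = 0, u_{(p+1)/2}*v_j = 0, and u_i*v_{(q+1)/2} = 0 for all 1 ≤ i ≤ (p−1)/2 and 1 ≤ j ≤ (q−1)/2. -/
/-!
Writing `f i j = uᵢ* vⱼ`, evaluating `u_{i+1}* A v_{j+1}` in two ways gives the Hankel relation
`f i (j + 1) = f (i + 1) j`, and the eigenvector equations give `f 1 j = 0 = f i 1`. Sliding along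
antidiagonals, `f i j = 0` whenever `i + j ≤ max p q`, which covers all three claims.
-/

open Matrix

theorem Matrix.dotProduct_eq_of_vecMul_eq_of_mulVec_eq {R m : Type*} [CommRing R] [Fintype m]
    {A : Matrix m m R} {lam : R} {x x' y y' : m → R}
    (hx : x' ᵥ* A = lam • x' + x) (hy : A *ᵥ y' = lam • y' + y) :
    x ⬝ᵥ y' = x' ⬝ᵥ y := by
  have h := dotProduct_mulVec x' A y'
  rw [hx, hy, dotProduct_add, add_dotProduct, dotProduct_smul, smul_dotProduct] at h
  exact (add_left_cancel h).symm

section Hankel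

variable {M : Type*} [Zero M] {p q : ℕ} {f : ℕ → ℕ → M}

theorem eq_zero_of_add_le_of_shift
    (hshift : ∀ i j, 1 ≤ i → i < p → 1 ≤ j → j < q → f i (j + 1) = f (i + 1) j)
    (hcol : ∀ i, 1 ≤ i → i < p → f i 1 = 0) :
    ∀ j i, 1 ≤ i → 1 ≤ j → j ≤ q → i + j ≤ p → f i j = 0
  | 0, _, _, hj, _, _ => by omega
  | 1, i, hi, _, _, hp => hcol i hi (by omega)
  | j + 2, i, hi, _, hq, hp => by
    rw [hshift i (j + 1) hi (by omega) (by omega) (by omega)]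
    exact eq_zero_of_add_le_of_shift hshift hcol (j + 1) (i + 1) (by omega) (by omega)
      (by omega) (by omega)

theorem eq_zero_of_add_le_max_of_shift
    (hshift : ∀ i j, 1 ≤ i → i < p → 1 ≤ j → j < q → f i (j + 1) = f (i + 1) j)
    (hrow : ∀ j, 1 ≤ j → j < q → f 1 j = 0) (hcol : ∀ i, 1 ≤ i → i < p → f i 1 = 0)
    {i j : ℕ} (hi : 1 ≤ i) (hj : 1 ≤ j) (hip : i ≤ p) (hjq : j ≤ q) (h : i + j ≤ max p q) :
    f i j = 0 := by
  rcases le_total q p with hqp | hpq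
  · exact eq_zero_of_add_le_of_shift hshift hcol j i hi hj hjq (by omega)
  · have hshift' : ∀ j i, 1 ≤ j → j < q → 1 ≤ i → i < p → f (i + 1) j = f i (j + 1) :=
      fun j i hj hjq hi hip => (hshift i j hi hip hj hjq).symm
    exact eq_zero_of_add_le_of_shift (f := fun j i => f i j) hshift' hrow i j hj hi hip (by omega)

end Hankel

theorem biorthogonality_odd_general {n p q : ℕ}
    (A : Matrix (Fin n) (Fin n) ℂ) (lam : ℂ)
    (u v : ℕ → Fin n → ℂ)
    (hpo : Odd p) (hqo : Odd q)
    (hu1 : Matrix.vecMul (star (u 1)) A = lam • star (u 1))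
    (huS : ∀ i, 1 ≤ i → i + 1 ≤ p →
      Matrix.vecMul (star (u (i + 1))) A = lam • star (u (i + 1)) + star (u i))
    (hv1 : A.mulVec (v 1) = lam • v 1)
    (hvS : ∀ j, 1 ≤ j → j + 1 ≤ q →
      A.mulVec (v (j + 1)) = lam • v (j + 1) + v j) :
    (∀ i j, 1 ≤ i → 2 * i + 1 ≤ p → 1 ≤ j → 2 * j + 1 ≤ q →
        dotProduct (star (u i)) (v j) = 0) ∧
    (∀ j, 1 ≤ j → 2 * j + 1 ≤ q →
        dotProduct (star (u ((p + 1) / 2))) (v j) = 0) ∧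
    (∀ i, 1 ≤ i → 2 * i + 1 ≤ p →
        dotProduct (star (u i)) (v ((q + 1) / 2)) = 0) := by
  have hzero : ∀ {i j}, 1 ≤ i → 1 ≤ j → i ≤ p → j ≤ q → i + j ≤ max p q →
      star (u i) ⬝ᵥ v j = 0 := eq_zero_of_add_le_max_of_shift (f := fun i j => star (u i) ⬝ᵥ v j)
    (fun i j hi hip hj hjq => dotProduct_eq_of_vecMul_eq_of_mulVec_eq (huS i hi hip) (hvS j hj hjq))
    (fun j hj hjq => by
      simpa using (dotProduct_eq_of_vecMul_eq_of_mulVec_eq (x := 0) (by rwa [add_zero])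
        (hvS j hj hjq)).symm)
    (fun i hi hip => by
      simpa using dotProduct_eq_of_vecMul_eq_of_mulVec_eq (huS i hi hip) (y := 0)
        (by rwa [add_zero]))
  obtain ⟨a, rfl⟩ := hpo
  obtain ⟨b, rfl⟩ := hqo
  refine ⟨fun i j hi hip hj hjq => ?_, fun j hj hjq => ?_, fun i hi hip => ?_⟩ <;>
    exact hzero (by omega) (by omega) (by omega) (by omega) (by omega)

/-- Corollary (odd case): for `p`, `q` odd, `uᵢ* vⱼ = 0`,
`u_{(p+1)/2}* vⱼ = 0` and `uᵢ* v_{(q+1)/2} = 0` for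
`1 ≤ i ≤ (p-1)/2`, `1 ≤ j ≤ (q-1)/2`. -/
theorem biorthogonality_odd {n p q : ℕ}
    (A : Matrix (Fin n) (Fin n) ℂ) (lam : ℂ)
    (u v : ℕ → Fin n → ℂ)
    (hpo : Odd p) (hqo : Odd q)
    (hu0 : u 1 ≠ 0) (hv0 : v 1 ≠ 0)
    (hu1 : Matrix.vecMul (star (u 1)) A = lam • star (u 1))
    (huS : ∀ i, 1 ≤ i → i + 1 ≤ p →
      Matrix.vecMul (star (u (i + 1))) A = lam • star (u (i + 1)) + star (u i))
    (hv1 : A.mulVec (v 1) = lam • v 1)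
    (hvS : ∀ j, 1 ≤ j → j + 1 ≤ q →
      A.mulVec (v (j + 1)) = lam • v (j + 1) + v j) :
    (∀ i j, 1 ≤ i → 2 * i + 1 ≤ p → 1 ≤ j → 2 * j + 1 ≤ q →
        dotProduct (star (u i)) (v j) = 0) ∧
    (∀ j, 1 ≤ j → 2 * j + 1 ≤ q →
        dotProduct (star (u ((p + 1) / 2))) (v j) = 0) ∧
    (∀ i, 1 ≤ i → 2 * i + 1 ≤ p →
        dotProduct (star (u i)) (v ((q + 1) / 2)) = 0) :=
  biorthogonality_odd_general A lam u v hpo hqo hu1 huS hv1 hvS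
end

section
/- Let A ∈ ℂ^{n×n}, λ₀ an eigenvalue of A, and let u₁,…,u_p and v₁,…,v_p be left and right Jordan chains for λ₀ corresponding to a Jordan block J_p(λ₀). If λ ∉ σ(A), then u_i*(A − λI)⁻¹v_j = 0 for all i, j ≥ 1 with i + j ≤ p. -/
open Matrix

/-!
With `N = A - λ₀ I` the chains read `uᵢ₊₁* N = uᵢ*` and `N vⱼ₊₁ = vⱼ`, `N v₁ = 0`,
so `uᵢ* = uᵢ₊ⱼ* Nʲ` and `Nʲ vⱼ = 0`. Hence `uᵢ* X vⱼ = uᵢ₊ⱼ* X Nʲ vⱼ = 0` for every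
`X` commuting with `A`, in particular for the resolvent `(A - λ I)⁻¹`.
-/

namespace Matrix

variable {m R : Type*} [Fintype m] [DecidableEq m]

section Semiring

variable [Semiring R] {N : Matrix m m R} {p : ℕ}

theorem pow_mulVec_eq_zero_of_chain {y : ℕ → m → R} (hy₁ : N *ᵥ y 1 = 0)
    (hy : ∀ j, 1 ≤ j → j + 1 ≤ p → N *ᵥ y (j + 1) = y j) :
    ∀ j, 1 ≤ j → j ≤ p → (N ^ j) *ᵥ y j = 0 := by
  intro j hj
  induction j, hj using Nat.le_induction with
  | base => exact fun _ => by rwa [pow_one]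
  | succ j hj ih =>
    intro hjp
    rw [pow_succ, ← mulVec_mulVec, hy j hj hjp, ih (by omega)]

theorem vecMul_pow_of_chain {x : ℕ → m → R}
    (hx : ∀ i, 1 ≤ i → i + 1 ≤ p → x (i + 1) ᵥ* N = x i) {i : ℕ} (hi : 1 ≤ i) :
    ∀ k, i + k ≤ p → x (i + k) ᵥ* (N ^ k) = x i := by
  intro k
  induction k with
  | zero => simp
  | succ k ih =>
    intro hk
    rw [pow_succ', ← vecMul_vecMul, ← add_assoc, hx (i + k) (by omega) hk, ih (by omega)]

theorem dotProduct_mulVec_eq_zero_of_commute {X : Matrix m m R} (hNX : Commute N X)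
    {x y : ℕ → m → R} (hx : ∀ i, 1 ≤ i → i + 1 ≤ p → x (i + 1) ᵥ* N = x i)
    (hy₁ : N *ᵥ y 1 = 0) (hy : ∀ j, 1 ≤ j → j + 1 ≤ p → N *ᵥ y (j + 1) = y j)
    {i j : ℕ} (hi : 1 ≤ i) (hj : 1 ≤ j) (hij : i + j ≤ p) :
    x i ⬝ᵥ (X *ᵥ y j) = 0 := by
  calc x i ⬝ᵥ (X *ᵥ y j)
      = x (i + j) ⬝ᵥ ((N ^ j * X) *ᵥ y j) := by
        rw [← vecMul_pow_of_chain hx hi j hij, ← dotProduct_mulVec, mulVec_mulVec]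
    _ = x (i + j) ⬝ᵥ (X *ᵥ ((N ^ j) *ᵥ y j)) := by
        rw [(hNX.pow_left j).eq, mulVec_mulVec]
    _ = 0 := by
        rw [pow_mulVec_eq_zero_of_chain hy₁ hy j hj (by omega), mulVec_zero, dotProduct_zero]

end Semiring

section CommRing

variable [CommRing R] {A : Matrix m m R} {c : R}

theorem sub_smul_one_mulVec_eq {v w : m → R} (h : A *ᵥ v = c • v + w) :
    (A - c • 1) *ᵥ v = w := by
  rw [sub_mulVec, h, smul_mulVec, one_mulVec, add_sub_cancel_left]

theorem vecMul_sub_smul_one_eq {v w : m → R} (h : v ᵥ* A = c • v + w) :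
    v ᵥ* (A - c • 1) = w := by
  rw [vecMul_sub, h, vecMul_smul, vecMul_one, add_sub_cancel_left]

-- `M⁻¹ = 0` for singular `M`, so this needs no invertibility.
theorem commute_sub_smul_one_inv (c d : R) : Commute (A - c • 1) (A - d • 1)⁻¹ := by
  have hAB : Commute A (A - d • 1) :=
    (Commute.refl A).sub_right ((Commute.one_right A).smul_right d)
  have hAinv : Commute A (A - d • 1)⁻¹ := by
    simpa using Matrix.Commute.zpow_right hAB (-1)
  exact hAinv.sub_left ((Commute.one_left _).smul_left c)

end CommRing

end Matrix

theorem resolvent_biorthogonality_general {n p : ℕ}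
    (A : Matrix (Fin n) (Fin n) ℂ) (lam0 lam : ℂ)
    (u v : ℕ → Fin n → ℂ)
    (huS : ∀ i, 1 ≤ i → i + 1 ≤ p →
      Matrix.vecMul (star (u (i + 1))) A = lam0 • star (u (i + 1)) + star (u i))
    (hv1 : A.mulVec (v 1) = lam0 • v 1)
    (hvS : ∀ j, 1 ≤ j → j + 1 ≤ p →
      A.mulVec (v (j + 1)) = lam0 • v (j + 1) + v j) :
    ∀ i j, 1 ≤ i → 1 ≤ j → i + j ≤ p →
      dotProduct (star (u i))
        ((A - lam • (1 : Matrix (Fin n) (Fin n) ℂ))⁻¹.mulVec (v j)) = 0 := by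
  intro i j hi hj hij
  exact dotProduct_mulVec_eq_zero_of_commute (x := fun i => star (u i))
    (commute_sub_smul_one_inv lam0 lam)
    (fun i hi hip => vecMul_sub_smul_one_eq (huS i hi hip))
    (sub_smul_one_mulVec_eq (by rw [hv1, add_zero]))
    (fun j hj hjp => sub_smul_one_mulVec_eq (hvS j hj hjp)) hi hj hij

/-- Biorthogonality through the resolvent: `uᵢ* (A - λI)⁻¹ vⱼ = 0` for
`i + j ≤ p`, `i, j ≥ 1`. -/
theorem resolvent_biorthogonality {n p : ℕ}
    (A : Matrix (Fin n) (Fin n) ℂ) (lam0 lam : ℂ)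
    (u v : ℕ → Fin n → ℂ)
    (hp : 1 ≤ p) (hu0 : u 1 ≠ 0) (hv0 : v 1 ≠ 0)
    (hu1 : Matrix.vecMul (star (u 1)) A = lam0 • star (u 1))
    (huS : ∀ i, 1 ≤ i → i + 1 ≤ p →
      Matrix.vecMul (star (u (i + 1))) A = lam0 • star (u (i + 1)) + star (u i))
    (hv1 : A.mulVec (v 1) = lam0 • v 1)
    (hvS : ∀ j, 1 ≤ j → j + 1 ≤ p →
      A.mulVec (v (j + 1)) = lam0 • v (j + 1) + v j)
    (hlam : (A - lam • (1 : Matrix (Fin n) (Fin n) ℂ)).det ≠ 0) :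
    ∀ i j, 1 ≤ i → 1 ≤ j → i + j ≤ p →
      dotProduct (star (u i))
        ((A - lam • (1 : Matrix (Fin n) (Fin n) ℂ))⁻¹.mulVec (v j)) = 0 :=
  resolvent_biorthogonality_general A lam0 lam u v huS hv1 hvS
end

section
/- Let A ∈ ℂ^{n×n} have eigenvalue λ₀ with algebraic multiplicity 2k and geometric multiplicity 1, with left and right Jordan chains u₁,…,u_{2k} and v₁,…,v_{2k}. Set U = [u₁ … u_k], V = [v₁ … v_k], and let R* ∈ ℂ^{k×n}, L ∈ ℂ^{n×k} satisfy R*V = U*L = I_k. Then for Â = A + (λ₁ − λ₀)·(V R* + L U*), the characteristic polynomial of Â equals that of A multiplied by ((λ₁ − x)/(λ₀ − x))^{2k}; i.e., the eigenvalues of Â are those of A with the 2k copies of λ₀ replaced by 2k copies of λ₁. -/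
/-!
Write `V = [v₁ … v_k]`, `W = U*`, `c = λ₁ - λ₀` and let `J` be the nilpotent shift. The chains
give `A V = V (λ₀ + J)` and `W A = (λ₀ + Jᵀ) W`, and `W V = 0` because `u_p* v_q = 0` whenever
`p + q ≤ 2k` (move `A` across the pairing and induct on `q`). For `x` outside the spectra, the
matrix determinant lemma turns `det (x - Â)` into `det (x - A)` times the determinant of the
`2k × 2k` capacitance matrix, which by these relations is block upper triangular with diagonal
blocks `1 - c (x - λ₀ - J)⁻¹` and `1 - c (x - λ₀ - Jᵀ)⁻¹`, each of determinant
`((x - λ₁) / (x - λ₀))ᵏ`. Equality at infinitely many `x` gives the polynomial identity.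
-/

open Matrix Polynomial

/-- Matrix whose columns are the chain vectors `w 1, …, w k`. -/
def chainMat {n : ℕ} (k : ℕ) (w : ℕ → Fin n → ℂ) : Matrix (Fin n) (Fin k) ℂ :=
  Matrix.of fun s i => w ((i : ℕ) + 1) s

namespace Matrix

section RankUpdate

variable {K : Type*} [CommRing K] {m ι κ : Type*} [Fintype m] [DecidableEq m]
  [Fintype ι] [DecidableEq ι] [Fintype κ] [DecidableEq κ]

theorem nonsing_inv_mul_eq_mul_nonsing_inv {B : Matrix m m K} {S : Matrix ι ι K}
    {V : Matrix m ι K} (h : B * V = V * S) (hB : IsUnit B.det) (hS : IsUnit S.det) :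
    B⁻¹ * V = V * S⁻¹ :=
  calc B⁻¹ * V = B⁻¹ * (V * S) * S⁻¹ := by
        rw [Matrix.mul_assoc, mul_nonsing_inv_cancel_right _ _ hS]
    _ = V * S⁻¹ := by rw [← h, nonsing_inv_mul_cancel_left _ _ hB]

theorem mul_nonsing_inv_eq_nonsing_inv_mul {B : Matrix m m K} {T : Matrix κ κ K}
    {W : Matrix κ m K} (h : W * B = T * W) (hB : IsUnit B.det) (hT : IsUnit T.det) :
    W * B⁻¹ = T⁻¹ * W :=
  calc W * B⁻¹ = T⁻¹ * (T * W) * B⁻¹ := by rw [nonsing_inv_mul_cancel_left _ _ hT]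
    _ = T⁻¹ * W := by rw [← h, Matrix.mul_assoc, mul_nonsing_inv_cancel_right _ _ hB]

theorem det_one_sub_smul_nonsing_inv_mul_det {S : Matrix ι ι K} (hS : IsUnit S.det) (c : K) :
    (1 - c • S⁻¹).det * S.det = (S - c • 1).det := by
  rw [← det_mul, Matrix.sub_mul, Matrix.one_mul, Matrix.smul_mul, nonsing_inv_mul _ hS]

theorem det_sub_smul_mul_add_mul {B : Matrix m m K} {S : Matrix ι ι K} {T : Matrix κ κ K}
    {V : Matrix m ι K} {R : Matrix ι m K} {L : Matrix m κ K} {W : Matrix κ m K}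
    (hBV : B * V = V * S) (hWB : W * B = T * W) (hWV : W * V = 0) (hRV : R * V = 1)
    (hWL : W * L = 1) (hB : IsUnit B.det) (hS : IsUnit S.det) (hT : IsUnit T.det) (c : K) :
    (B - c • (V * R + L * W)).det * S.det * T.det
      = B.det * (S - c • 1).det * (T - c • 1).det := by
  have hblocks : fromRows R W * B⁻¹ * fromCols V L = fromBlocks S⁻¹ (R * (B⁻¹ * L)) 0 T⁻¹ := by
    rw [Matrix.mul_assoc, mul_fromCols, fromRows_mul_fromCols,
      nonsing_inv_mul_eq_mul_nonsing_inv hBV hB hS, ← Matrix.mul_assoc W B⁻¹,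
      mul_nonsing_inv_eq_nonsing_inv_mul hWB hB hT, ← Matrix.mul_assoc R V, hRV,
      ← Matrix.mul_assoc W V, hWV, Matrix.mul_assoc T⁻¹, hWL, Matrix.one_mul, Matrix.zero_mul,
      Matrix.mul_one]
  have hsplit : B - c • (V * R + L * W) = B + fromCols V L * (-c • fromRows R W) := by
    rw [Matrix.mul_smul, fromCols_mul_fromRows, neg_smul, ← sub_eq_add_neg]
  rw [hsplit, det_add_mul _ _ hB, Matrix.smul_mul, Matrix.smul_mul, hblocks,
    ← fromBlocks_one, fromBlocks_smul, fromBlocks_add, smul_zero, zero_add, add_zero,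
    det_fromBlocks_zero₂₁, ← det_one_sub_smul_nonsing_inv_mul_det hS,
    ← det_one_sub_smul_nonsing_inv_mul_det hT]
  simp only [neg_smul, ← sub_eq_add_neg]
  ring

end RankUpdate

theorem charpoly_add_smul_mul_add_mul {K : Type*} [Field K] [Infinite K]
    {m ι κ : Type*} [Fintype m] [DecidableEq m] [Fintype ι] [DecidableEq ι]
    [Fintype κ] [DecidableEq κ] {A : Matrix m m K} {D : Matrix ι ι K} {D' : Matrix κ κ K}
    {V : Matrix m ι K} {R : Matrix ι m K} {L : Matrix m κ K} {W : Matrix κ m K}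
    (hAV : A * V = V * D) (hWA : W * A = D' * W) (hWV : W * V = 0) (hRV : R * V = 1)
    (hWL : W * L = 1) (c : K) :
    (A + c • (V * R + L * W)).charpoly * D.charpoly * D'.charpoly
      = A.charpoly * (D + c • 1).charpoly * (D' + c • 1).charpoly := by
  set p := A.charpoly * D.charpoly * D'.charpoly
  have hp : p ≠ 0 := ((A.charpoly_monic.mul D.charpoly_monic).mul D'.charpoly_monic).ne_zero
  refine eq_of_infinite_eval_eq _ _ ((finite_setOfPred_isRoot hp).infinite_compl.mono ?_)
  intro x hx
  simp only [Set.mem_compl_iff, Set.mem_ofPred_eq, IsRoot.def, p, eval_mul, mul_ne_zero_iff,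
    eval_charpoly, scalar_apply, ← smul_one_eq_diagonal] at hx ⊢
  obtain ⟨⟨hA, hD⟩, hD'⟩ := hx
  have hBV : (x • 1 - A) * V = V * (x • 1 - D) := by
    rw [Matrix.sub_mul, Matrix.mul_sub, hAV, Matrix.smul_mul, Matrix.mul_smul, Matrix.one_mul,
      Matrix.mul_one]
  have hWB : W * (x • 1 - A) = (x • 1 - D') * W := by
    rw [Matrix.sub_mul, Matrix.mul_sub, hWA, Matrix.smul_mul, Matrix.mul_smul, Matrix.one_mul,
      Matrix.mul_one]
  simpa only [sub_add_eq_sub_sub] using det_sub_smul_mul_add_mul hBV hWB hWV hRV hWL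
    hA.isUnit hD.isUnit hD'.isUnit c

end Matrix

def shiftMat (K : Type*) [Zero K] [One K] (k : ℕ) : Matrix (Fin k) (Fin k) K :=
  Matrix.of fun i j => if (i : ℕ) + 1 = j then 1 else 0

theorem charpoly_smul_one_add_shiftMat {K : Type*} [CommRing K] (k : ℕ) (a : K) :
    (a • 1 + shiftMat K k).charpoly = (X - C a) ^ k := by
  rw [charpoly_of_isUpperTriangular]
  · simp [shiftMat]
  · intro i j hij
    have hij : (j : ℕ) < i := hij
    simp [shiftMat, Fin.ne_of_gt hij, show (i : ℕ) + 1 ≠ j by omega]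

theorem chainMat_mul_shiftMat_apply {n k : ℕ} (w : ℕ → Fin n → ℂ) (s : Fin n) (i : Fin k) :
    (chainMat k w * shiftMat ℂ k) s i = if (i : ℕ) = 0 then 0 else w i s := by
  simp only [mul_apply, chainMat, shiftMat, of_apply, mul_ite, mul_one, mul_zero]
  rcases i with ⟨_ | i, hi⟩
  · simp
  · rw [Finset.sum_eq_single ⟨i, by omega⟩] <;> simp +contextual [Fin.ext_iff]

/-- Chains are indexed from `1`, as in the paper; `w 0` plays no role. -/
def IsJordanChain {R m : Type*} [CommRing R] [Fintype m] (M : Matrix m m R) (μ : R)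
    (w : ℕ → m → R) (ℓ : ℕ) : Prop :=
  M *ᵥ w 1 = μ • w 1 ∧ ∀ j, 1 ≤ j → j + 1 ≤ ℓ → M *ᵥ w (j + 1) = μ • w (j + 1) + w j

namespace IsJordanChain

theorem dotProduct_eq_zero {R m : Type*} [CommRing R] [Fintype m] {M : Matrix m m R} {μ : R}
    {y w : ℕ → m → R} {ℓ : ℕ} (hy : IsJordanChain Mᵀ μ y ℓ) (hw : IsJordanChain M μ w ℓ)
    {p q : ℕ} (hp : 1 ≤ p) (hq : 1 ≤ q) (hpq : p + q ≤ ℓ) : y p ⬝ᵥ w q = 0 := by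
  induction q generalizing p with
  | zero => omega
  | succ q ih =>
    have hstep : y p ⬝ᵥ w (q + 1) = y (p + 1) ⬝ᵥ (M *ᵥ w (q + 1) - μ • w (q + 1)) := by
      rw [dotProduct_sub, dotProduct_mulVec, ← mulVec_transpose, hy.2 p hp (by omega),
        add_dotProduct, dotProduct_smul, smul_dotProduct]
      abel
    rcases Nat.eq_zero_or_pos q with rfl | hq
    · rw [hstep, hw.1, sub_self, dotProduct_zero]
    · rw [hstep, hw.2 q hq (by omega), add_sub_cancel_left, ih (by omega) hq (by omega)]

variable {n k ℓ : ℕ} {M : Matrix (Fin n) (Fin n) ℂ} {μ : ℂ} {y w : ℕ → Fin n → ℂ}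

theorem mul_chainMat (h : IsJordanChain M μ w ℓ) (hk : k ≤ ℓ) :
    M * chainMat k w = chainMat k w * (μ • 1 + shiftMat ℂ k) := by
  ext s ⟨i, hi⟩
  have hcol : (M * chainMat k w) s ⟨i, hi⟩ = (M *ᵥ w (i + 1)) s := by
    simp [mul_apply, mulVec, dotProduct, chainMat]
  rw [hcol, Matrix.mul_add, Matrix.mul_smul, Matrix.mul_one, Matrix.add_apply,
    Matrix.smul_apply, chainMat_mul_shiftMat_apply]
  rcases i with _ | i
  · simp [h.1, chainMat]
  · simp [h.2 (i + 1) (by omega) (by omega), chainMat]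

theorem transpose_chainMat_mul (h : IsJordanChain Mᵀ μ y ℓ) (hk : k ≤ ℓ) :
    (chainMat k y)ᵀ * M = (μ • 1 + shiftMat ℂ k)ᵀ * (chainMat k y)ᵀ := by
  simpa only [transpose_mul, transpose_transpose] using congrArg transpose (h.mul_chainMat hk)

theorem transpose_chainMat_mul_chainMat (hy : IsJordanChain Mᵀ μ y ℓ)
    (hw : IsJordanChain M μ w ℓ) (hk : 2 * k ≤ ℓ) : (chainMat k y)ᵀ * chainMat k w = 0 := by
  ext i j
  simpa [mul_apply, dotProduct, chainMat] using
    hy.dotProduct_eq_zero hw (p := i + 1) (q := j + 1) (by omega) (by omega) (by omega)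

end IsJordanChain

theorem conjTranspose_chainMat {n k : ℕ} (u : ℕ → Fin n → ℂ) :
    (chainMat k u)ᴴ = (chainMat k (star u))ᵀ :=
  rfl

theorem even_shift_charpoly_general {n k : ℕ}
    (A : Matrix (Fin n) (Fin n) ℂ) (lam0 lam1 : ℂ)
    (u v : ℕ → Fin n → ℂ)
    (hu1 : Matrix.vecMul (star (u 1)) A = lam0 • star (u 1))
    (huS : ∀ i, 1 ≤ i → i + 1 ≤ 2 * k →
      Matrix.vecMul (star (u (i + 1))) A = lam0 • star (u (i + 1)) + star (u i))
    (hv1 : A.mulVec (v 1) = lam0 • v 1)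
    (hvS : ∀ j, 1 ≤ j → j + 1 ≤ 2 * k →
      A.mulVec (v (j + 1)) = lam0 • v (j + 1) + v j)
    (R L : Matrix (Fin n) (Fin k) ℂ)
    (hR : Rᴴ * chainMat k v = 1)
    (hL : (chainMat k u)ᴴ * L = 1) :
    (A + (lam1 - lam0) • (chainMat k v * Rᴴ + L * (chainMat k u)ᴴ)).charpoly
        * (X - C lam0) ^ (2 * k)
      = A.charpoly * (X - C lam1) ^ (2 * k) := by
  have hv : IsJordanChain A lam0 v (2 * k) := ⟨hv1, hvS⟩
  have hu : IsJordanChain Aᵀ lam0 (star u) (2 * k) := by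
    simpa only [IsJordanChain, mulVec_transpose] using ⟨hu1, huS⟩
  have hUA : (chainMat k u)ᴴ * A = (lam0 • 1 + shiftMat ℂ k)ᵀ * (chainMat k u)ᴴ := by
    simpa only [conjTranspose_chainMat] using hu.transpose_chainMat_mul (by omega)
  have hUV : (chainMat k u)ᴴ * chainMat k v = 0 := by
    simpa only [conjTranspose_chainMat] using hu.transpose_chainMat_mul_chainMat hv le_rfl
  have hshift : lam0 • 1 + shiftMat ℂ k + (lam1 - lam0) • 1 = lam1 • 1 + shiftMat ℂ k := by
    rw [add_right_comm, ← add_smul, add_sub_cancel]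
  have hshiftT :
      (lam0 • 1 + shiftMat ℂ k)ᵀ + (lam1 - lam0) • 1 = (lam1 • 1 + shiftMat ℂ k)ᵀ := by
    rw [← hshift, transpose_add _ ((lam1 - lam0) • 1), transpose_smul, transpose_one]
  have key := charpoly_add_smul_mul_add_mul (hv.mul_chainMat (by omega)) hUA hUV hR hL
    (lam1 - lam0)
  rw [hshift, hshiftT, charpoly_transpose, charpoly_transpose, charpoly_smul_one_add_shiftMat,
    charpoly_smul_one_add_shiftMat] at key
  linear_combination key

/-- Even-multiplicity shift: the rank-`2k` update replaces the `2k` copies of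
`λ₀` by `2k` copies of `λ₁` in the characteristic polynomial. -/
theorem even_shift_charpoly {n k : ℕ}
    (A : Matrix (Fin n) (Fin n) ℂ) (lam0 lam1 : ℂ)
    (u v : ℕ → Fin n → ℂ)
    (hk : 1 ≤ k)
    (halg : (Matrix.charpoly A).rootMultiplicity lam0 = 2 * k)
    (hgeo : Module.finrank ℂ
      ↥(LinearMap.ker ((A - lam0 • (1 : Matrix (Fin n) (Fin n) ℂ)).mulVecLin)) = 1)
    (hu0 : u 1 ≠ 0) (hv0 : v 1 ≠ 0)
    (hu1 : Matrix.vecMul (star (u 1)) A = lam0 • star (u 1))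
    (huS : ∀ i, 1 ≤ i → i + 1 ≤ 2 * k →
      Matrix.vecMul (star (u (i + 1))) A = lam0 • star (u (i + 1)) + star (u i))
    (hv1 : A.mulVec (v 1) = lam0 • v 1)
    (hvS : ∀ j, 1 ≤ j → j + 1 ≤ 2 * k →
      A.mulVec (v (j + 1)) = lam0 • v (j + 1) + v j)
    (R L : Matrix (Fin n) (Fin k) ℂ)
    (hR : Rᴴ * chainMat k v = 1)
    (hL : (chainMat k u)ᴴ * L = 1) :
    (A + (lam1 - lam0) • (chainMat k v * Rᴴ + L * (chainMat k u)ᴴ)).charpoly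
        * (X - C lam0) ^ (2 * k)
      = A.charpoly * (X - C lam1) ^ (2 * k) :=
  even_shift_charpoly_general A lam0 lam1 u v hu1 huS hv1 hvS R L hR hL
end

section
/- With the setup of the even-multiplicity shift (Â = A + (λ₁ − λ₀)(VR* + LU*), where V, U consist of the first k right and left generalized eigenvectors of a 2k Jordan chain for λ₀ and R*V = U*L = I_k), the shifted matrix satisfies ÂV = V·J_k(λ₁) and U*Â = J_k(λ₁)ᵀ·U*; in particular Âv₁ = λ₁v₁, Âv_{i+1} = λ₁v_{i+1} + v_i, u₁*Â = λ₁u₁*, and u_{i+1}*Â = λ₁u_{i+1}* + u_i* for 1 ≤ i ≤ k−1. -/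
open Matrix

/-- The `k × k` Jordan block with eigenvalue `x`. -/
def jordanBlock (k : ℕ) (x : ℂ) : Matrix (Fin k) (Fin k) ℂ :=
  Matrix.of fun i j => if i = j then x else if (i : ℕ) + 1 = (j : ℕ) then 1 else 0

lemma jordanBlock_shift (k : ℕ) (x y : ℂ) :
    jordanBlock k y = jordanBlock k x + (y - x) • (1 : Matrix (Fin k) (Fin k) ℂ) := by
  ext i j
  simp only [jordanBlock, Matrix.add_apply, Matrix.smul_apply, Matrix.one_apply, of_apply,
    smul_eq_mul]
  split_ifs <;> ring

lemma jordanBlock_zero_apply {k : ℕ} (i j : Fin k) :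
    jordanBlock k 0 i j = if (i : ℕ) + 1 = (j : ℕ) then 1 else 0 := by
  simp only [jordanBlock, of_apply]
  rcases eq_or_ne i j with h | h
  · subst h
    rw [if_pos rfl, if_neg (by omega)]
  · rw [if_neg h]

lemma sumN {k : ℕ} (w : ℕ → ℂ) (j : Fin k) :
    ∑ i : Fin k, w ((i : ℕ) + 1) * (if (i : ℕ) + 1 = (j : ℕ) then 1 else 0)
      = if (j : ℕ) = 0 then 0 else w (j : ℕ) := by
  by_cases hj : (j : ℕ) = 0
  · rw [if_pos hj]
    apply Finset.sum_eq_zero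
    intro i _
    rw [if_neg (by omega), mul_zero]
  · rw [if_neg hj]
    have hjk : (j : ℕ) - 1 < k := lt_of_le_of_lt (Nat.pred_le _) j.isLt
    rw [Finset.sum_eq_single (⟨(j : ℕ) - 1, hjk⟩ : Fin k)]
    · show w ((j : ℕ) - 1 + 1) * (if (j : ℕ) - 1 + 1 = (j : ℕ) then 1 else 0) = w (j : ℕ)
      have hje : (j : ℕ) - 1 + 1 = (j : ℕ) := by omega
      rw [hje, if_pos rfl, mul_one]
    · intro b _ hb
      rw [if_neg, mul_zero]
      intro h
      exact hb (Fin.ext (show (b : ℕ) = (j : ℕ) - 1 by omega))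
    · intro h; exact absurd (Finset.mem_univ _) h

lemma sumN' {k : ℕ} (w : ℕ → ℂ) (j : Fin k) :
    ∑ i : Fin k, (if (i : ℕ) + 1 = (j : ℕ) then 1 else 0) * w ((i : ℕ) + 1)
      = if (j : ℕ) = 0 then 0 else w (j : ℕ) := by
  simpa [mul_comm] using sumN w j

/-- Even-multiplicity shift: the first half of the left and right Jordan chains
are preserved, now as chains for `λ₁`: `ÂV = V J_k(λ₁)` and `U*Â = J_k(λ₁)ᵀ U*`. -/
theorem even_shift_chains {n k : ℕ}
    (A : Matrix (Fin n) (Fin n) ℂ) (lam0 lam1 : ℂ)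
    (u v : ℕ → Fin n → ℂ)
    (hk : 1 ≤ k)
    (halg : (Matrix.charpoly A).rootMultiplicity lam0 = 2 * k)
    (hgeo : Module.finrank ℂ
      ↥(LinearMap.ker ((A - lam0 • (1 : Matrix (Fin n) (Fin n) ℂ)).mulVecLin)) = 1)
    (hu0 : u 1 ≠ 0) (hv0 : v 1 ≠ 0)
    (hu1 : Matrix.vecMul (star (u 1)) A = lam0 • star (u 1))
    (huS : ∀ i, 1 ≤ i → i + 1 ≤ 2 * k →
      Matrix.vecMul (star (u (i + 1))) A = lam0 • star (u (i + 1)) + star (u i))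
    (hv1 : A.mulVec (v 1) = lam0 • v 1)
    (hvS : ∀ j, 1 ≤ j → j + 1 ≤ 2 * k →
      A.mulVec (v (j + 1)) = lam0 • v (j + 1) + v j)
    (R L : Matrix (Fin n) (Fin k) ℂ)
    (hR : Rᴴ * chainMat k v = 1)
    (hL : (chainMat k u)ᴴ * L = 1) :
    (A + (lam1 - lam0) • (chainMat k v * Rᴴ + L * (chainMat k u)ᴴ)) * chainMat k v
        = chainMat k v * jordanBlock k lam1 ∧
    (chainMat k u)ᴴ * (A + (lam1 - lam0) • (chainMat k v * Rᴴ + L * (chainMat k u)ᴴ))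
        = (jordanBlock k lam1)ᵀ * (chainMat k u)ᴴ := by
  -- orthogonality of first-level left eigenvector with the right chain
  have key1 : ∀ m, 1 ≤ m → m + 1 ≤ 2 * k → star (u 1) ⬝ᵥ v m = 0 := by
    intro m hm hm2
    have h1 : star (u 1) ⬝ᵥ (A *ᵥ v (m + 1))
        = lam0 * (star (u 1) ⬝ᵥ v (m + 1)) := by
      rw [Matrix.dotProduct_mulVec, hu1]
      simp [smul_dotProduct]
    have h2 : star (u 1) ⬝ᵥ (A *ᵥ v (m + 1))
        = lam0 * (star (u 1) ⬝ᵥ v (m + 1)) + star (u 1) ⬝ᵥ v m := by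
      rw [hvS m hm hm2]
      simp [dotProduct_add, dotProduct_smul]
    linear_combination h1 - h2
  have shift : ∀ i j, 1 ≤ i → i + 1 ≤ 2 * k → 1 ≤ j → j + 1 ≤ 2 * k →
      star (u i) ⬝ᵥ v (j + 1) = star (u (i + 1)) ⬝ᵥ v j := by
    intro i j hi hi2 hj hj2
    have ha : star (u (i + 1)) ⬝ᵥ (A *ᵥ v (j + 1))
        = lam0 * (star (u (i + 1)) ⬝ᵥ v (j + 1)) + star (u i) ⬝ᵥ v (j + 1) := by
      rw [Matrix.dotProduct_mulVec, huS i hi hi2]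
      simp [add_dotProduct, smul_dotProduct]
    have hb : star (u (i + 1)) ⬝ᵥ (A *ᵥ v (j + 1))
        = lam0 * (star (u (i + 1)) ⬝ᵥ v (j + 1)) + star (u (i + 1)) ⬝ᵥ v j := by
      rw [hvS j hj hj2]
      simp [dotProduct_add, dotProduct_smul]
    linear_combination hb - ha
  have orth : ∀ d j, 1 ≤ j → (d + 1) + j ≤ 2 * k → star (u (d + 1)) ⬝ᵥ v j = 0 := by
    intro d
    induction d with
    | zero => exact fun j hj hjk => key1 j hj (by omega)
    | succ d ih =>
      intro j hj hjk
      rw [← shift (d + 1) j (by omega) (by omega) hj (by omega)]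
      exact ih (j + 1) (by omega) (by omega)
  have hUV : (chainMat k u)ᴴ * chainMat k v = 0 := by
    ext i j
    have he : ((chainMat k u)ᴴ * chainMat k v) i j
        = star (u ((i : ℕ) + 1)) ⬝ᵥ v ((j : ℕ) + 1) := by
      simp [Matrix.mul_apply, chainMat, Matrix.conjTranspose_apply, dotProduct]
    rw [he, Matrix.zero_apply]
    have hi := i.isLt
    have hj := j.isLt
    exact orth (i : ℕ) ((j : ℕ) + 1) (by omega) (by omega)
  -- A V = V J(lam0)
  have hAV : A * chainMat k v = chainMat k v * jordanBlock k lam0 := by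
    ext s j
    have hj := j.isLt
    have lhs : (A * chainMat k v) s j = (A *ᵥ v ((j : ℕ) + 1)) s := by
      simp [Matrix.mul_apply, chainMat, Matrix.mulVec, dotProduct]
    have rhs : (chainMat k v * jordanBlock k lam0) s j
        = lam0 * v ((j : ℕ) + 1) s + (if (j : ℕ) = 0 then 0 else v (j : ℕ) s) := by
      rw [jordanBlock_shift k 0 lam0, Matrix.mul_add, Matrix.mul_smul, Matrix.mul_one,
        Matrix.add_apply, Matrix.smul_apply, smul_eq_mul, sub_zero, add_comm]
      congr 1
      · rw [Matrix.mul_apply]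
        simp_rw [jordanBlock_zero_apply]
        exact sumN (fun m => v m s) j
    rw [lhs, rhs]
    by_cases hj0 : (j : ℕ) = 0
    · rw [hj0, if_pos rfl, add_zero, hv1]
      rfl
    · rw [if_neg hj0, hvS (j : ℕ) (by omega) (by omega)]
      rfl
  -- Uᴴ A = J(lam0)ᵀ Uᴴ
  have hUA : (chainMat k u)ᴴ * A = (jordanBlock k lam0)ᵀ * (chainMat k u)ᴴ := by
    ext i s
    have hi := i.isLt
    have lhs : ((chainMat k u)ᴴ * A) i s = Matrix.vecMul (star (u ((i : ℕ) + 1))) A s := by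
      simp [Matrix.mul_apply, chainMat, Matrix.conjTranspose_apply, Matrix.vecMul,
        dotProduct]
    have rhs : ((jordanBlock k lam0)ᵀ * (chainMat k u)ᴴ) i s
        = lam0 * star (u ((i : ℕ) + 1) s) + (if (i : ℕ) = 0 then 0 else star (u (i : ℕ) s)) := by
      rw [jordanBlock_shift k 0 lam0, Matrix.transpose_add, Matrix.transpose_smul,
        Matrix.transpose_one, Matrix.add_mul, Matrix.smul_mul, Matrix.one_mul,
        Matrix.add_apply, Matrix.smul_apply, smul_eq_mul, sub_zero, add_comm]
      congr 1
      · rw [Matrix.mul_apply]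
        simp_rw [Matrix.transpose_apply, jordanBlock_zero_apply]
        have := sumN' (fun m => star (u m s)) i
        simpa [chainMat, Matrix.conjTranspose_apply] using this
    rw [lhs, rhs]
    by_cases hi0 : (i : ℕ) = 0
    · rw [hi0, if_pos rfl, add_zero, hu1]
      rfl
    · rw [if_neg hi0, huS (i : ℕ) (by omega) (by omega)]
      rfl
  constructor
  · rw [Matrix.add_mul, Matrix.smul_mul, Matrix.add_mul, Matrix.mul_assoc, Matrix.mul_assoc,
      hR, hUV, Matrix.mul_one, Matrix.mul_zero, add_zero, hAV,
      jordanBlock_shift k lam0 lam1, Matrix.mul_add, Matrix.mul_smul, Matrix.mul_one]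
  · rw [Matrix.mul_add, Matrix.mul_smul, Matrix.mul_add, ← Matrix.mul_assoc, ← Matrix.mul_assoc,
      hUV, hL, Matrix.zero_mul, Matrix.one_mul, zero_add, hUA,
      jordanBlock_shift k lam0 lam1, Matrix.transpose_add, Matrix.transpose_smul,
      Matrix.transpose_one, Matrix.add_mul, Matrix.smul_mul, Matrix.one_mul]
end

section
/- Let T = [[J_k(λ), C], [0, J_k(λ)]] with c_{k,1} ≠ 0. Then the geometric multiplicity of λ as an eigenvalue of T is 1, i.e., dim ker(T − λI_{2k}) = 1. -/
open Matrix

lemma aux_sum {k : ℕ} (i : Fin k) (x : Fin k → ℂ) :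
    ∑ j : Fin k, (if i = j then (0:ℂ) else if (i:ℕ)+1 = (j:ℕ) then 1 else 0) * x j
      = if h : (i:ℕ)+1 < k then x ⟨(i:ℕ)+1, h⟩ else 0 := by
  have hterm : ∀ j : Fin k, (if i = j then (0:ℂ) else if (i:ℕ)+1 = (j:ℕ) then 1 else 0) * x j
      = if (i:ℕ)+1 = (j:ℕ) then x j else 0 := by
    intro j
    rcases eq_or_ne i j with h | h
    · subst h
      simp
    · rw [if_neg h]
      split <;> simp
  simp_rw [hterm]
  split
  · next h =>
    rw [Finset.sum_eq_single (⟨(i:ℕ)+1, h⟩ : Fin k)]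
    · simp
    · intro b _ hb
      rw [if_neg]
      intro hc
      exact hb (Fin.ext hc.symm)
    · simp
  · next h =>
    apply Finset.sum_eq_zero
    intro j _
    rw [if_neg]
    intro hc
    exact h (hc ▸ j.isLt)

/-- If `c_{k,1} ≠ 0`, the geometric multiplicity of `λ` for
`T = [[J_k(λ), C], [0, J_k(λ)]]` is `1`. -/
theorem geometric_multiplicity_one {k : ℕ} (hk : 0 < k)
    (lam : ℂ) (C : Matrix (Fin k) (Fin k) ℂ)
    (hc : C ⟨k - 1, by omega⟩ ⟨0, hk⟩ ≠ 0) :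
    Module.finrank ℂ
      ↥(LinearMap.ker
        ((Matrix.fromBlocks (jordanBlock k lam) C 0 (jordanBlock k lam)
            - lam • (1 : Matrix (Fin k ⊕ Fin k) (Fin k ⊕ Fin k) ℂ)).mulVecLin))
      = 1 := by
  set M : Matrix (Fin k ⊕ Fin k) (Fin k ⊕ Fin k) ℂ :=
    Matrix.fromBlocks (jordanBlock k lam) C 0 (jordanBlock k lam)
      - lam • (1 : Matrix (Fin k ⊕ Fin k) (Fin k ⊕ Fin k) ℂ) with hM
  -- entries of M
  have hMll : ∀ i j : Fin k, M (Sum.inl i) (Sum.inl j)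
      = (if i = j then (0:ℂ) else if (i:ℕ)+1 = (j:ℕ) then 1 else 0) := by
    intro i j
    simp only [hM, Matrix.sub_apply, Matrix.smul_apply, Matrix.fromBlocks_apply₁₁,
      jordanBlock, Matrix.of_apply, Matrix.one_apply, Sum.inl.injEq, smul_eq_mul]
    split <;> simp_all
  have hMlr : ∀ i j : Fin k, M (Sum.inl i) (Sum.inr j) = C i j := by
    intro i j
    simp [hM, Matrix.one_apply]
  have hMrl : ∀ i j : Fin k, M (Sum.inr i) (Sum.inl j) = 0 := by
    intro i j
    simp [hM, Matrix.one_apply]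
  have hMrr : ∀ i j : Fin k, M (Sum.inr i) (Sum.inr j)
      = (if i = j then (0:ℂ) else if (i:ℕ)+1 = (j:ℕ) then 1 else 0) := by
    intro i j
    simp only [hM, Matrix.sub_apply, Matrix.smul_apply, Matrix.fromBlocks_apply₂₂,
      jordanBlock, Matrix.of_apply, Matrix.one_apply, Sum.inr.injEq, smul_eq_mul]
    split <;> simp_all
  -- mulVec rows
  have hrowl : ∀ (w : Fin k ⊕ Fin k → ℂ) (i : Fin k),
      M.mulVec w (Sum.inl i)
        = (if h : (i:ℕ)+1 < k then w (Sum.inl ⟨(i:ℕ)+1, h⟩) else 0)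
          + ∑ j, C i j * w (Sum.inr j) := by
    intro w i
    rw [Matrix.mulVec, dotProduct, Fintype.sum_sum_type]
    congr 1
    · simp_rw [hMll]
      exact aux_sum i (fun j => w (Sum.inl j))
    · simp_rw [hMlr]
  have hrowr : ∀ (w : Fin k ⊕ Fin k → ℂ) (i : Fin k),
      M.mulVec w (Sum.inr i)
        = (if h : (i:ℕ)+1 < k then w (Sum.inr ⟨(i:ℕ)+1, h⟩) else 0) := by
    intro w i
    rw [Matrix.mulVec, dotProduct, Fintype.sum_sum_type]
    simp_rw [hMrl, hMrr, zero_mul, Finset.sum_const_zero, zero_add]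
    exact aux_sum i (fun j => w (Sum.inr j))
  -- the spanning vector
  set v : Fin k ⊕ Fin k → ℂ := Sum.elim (Pi.single ⟨0, hk⟩ 1) 0 with hv
  have hvne : v ≠ 0 := by
    intro h
    have := congrFun h (Sum.inl ⟨0, hk⟩)
    simp [hv] at this
  have hker : LinearMap.ker M.mulVecLin = Submodule.span ℂ {v} := by
    apply le_antisymm
    · intro w hw
      rw [LinearMap.mem_ker, Matrix.mulVecLin_apply] at hw
      -- step 1: w (inr j) = 0 for j ≠ 0
      have h1 : ∀ j : Fin k, (j:ℕ) ≠ 0 → w (Sum.inr j) = 0 := by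
        intro j hj
        obtain ⟨m, hm⟩ : ∃ m, (j:ℕ) = m + 1 := ⟨(j:ℕ) - 1, by omega⟩
        have hmk : m < k := by omega
        have := congrFun hw (Sum.inr ⟨m, hmk⟩)
        rw [hrowr] at this
        have hm1 : m + 1 < k := by omega
        rw [dif_pos hm1] at this
        have hj : j = (⟨m + 1, hm1⟩ : Fin k) := Fin.ext hm
        rw [hj]
        simpa using this
      -- step 2: w (inr 0) = 0
      have h2 : w (Sum.inr ⟨0, hk⟩) = 0 := by
        have := congrFun hw (Sum.inl ⟨k - 1, by omega⟩)
        rw [hrowl] at this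
        rw [dif_neg (by simp only [Fin.val_mk]; omega)] at this
        rw [zero_add] at this
        rw [Finset.sum_eq_single (⟨0, hk⟩ : Fin k)] at this
        · simp only [Pi.zero_apply] at this
          rcases mul_eq_zero.mp this with h | h
          · exact absurd h hc
          · exact h
        · intro b _ hb
          rw [h1 b (fun h => hb (Fin.ext h)), mul_zero]
        · simp
      have h1' : ∀ j : Fin k, w (Sum.inr j) = 0 := by
        intro j
        rcases Nat.eq_zero_or_pos (j:ℕ) with h | h
        · have : j = ⟨0, hk⟩ := Fin.ext h
          rw [this]; exact h2
        · exact h1 j (by omega)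
      -- step 3: w (inl j) = 0 for j ≠ 0
      have h3 : ∀ j : Fin k, (j:ℕ) ≠ 0 → w (Sum.inl j) = 0 := by
        intro j hj
        obtain ⟨m, hm⟩ : ∃ m, (j:ℕ) = m + 1 := ⟨(j:ℕ) - 1, by omega⟩
        have hmk : m < k := by omega
        have := congrFun hw (Sum.inl ⟨m, hmk⟩)
        rw [hrowl] at this
        have hm1 : m + 1 < k := by omega
        rw [dif_pos hm1] at this
        rw [Finset.sum_eq_zero (fun j _ => by rw [h1' j, mul_zero])] at this
        rw [add_zero] at this
        simp only [Pi.zero_apply] at this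
        rw [show j = ⟨m + 1, hm1⟩ from Fin.ext hm]
        exact this
      -- conclude
      apply Submodule.mem_span_singleton.mpr
      refine ⟨w (Sum.inl ⟨0, hk⟩), ?_⟩
      funext p
      rcases p with i | i
      · rcases Nat.eq_zero_or_pos (i:ℕ) with h | h
        · have hi : i = ⟨0, hk⟩ := Fin.ext h
          subst hi
          simp [hv]
        · rw [h3 i (by omega)]
          simp only [Pi.smul_apply, hv, Sum.elim_inl, smul_eq_mul]
          rw [Pi.single_eq_of_ne (fun hh => by simp [Fin.ext_iff] at hh; omega)]
          ring
      · rw [h1' i]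
        simp [hv]
    · rw [Submodule.span_le, Set.singleton_subset_iff]
      rw [SetLike.mem_coe, LinearMap.mem_ker, Matrix.mulVecLin_apply]
      funext p
      rcases p with i | i
      · rw [hrowl]
        simp only [Pi.zero_apply, hv, Sum.elim_inr, Sum.elim_inl]
        rw [Finset.sum_eq_zero (fun j _ => by simp), add_zero]
        split
        · next h =>
          rw [Pi.single_eq_of_ne (fun hh => by
            have := Fin.val_eq_val (⟨(i:ℕ)+1, h⟩ : Fin k) ⟨0, hk⟩ |>.mpr hh
            simp at this)]
        · rfl
      · rw [hrowr]
        simp [hv]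
  rw [hker, finrank_span_singleton hvne]
end

section
/- Let A ∈ ℂ^{n×n} have eigenvalue λ₀ with algebraic multiplicity 2k+1 and geometric multiplicity 1, with left and right Jordan chains u₁,…,u_{2k+1} and v₁,…,v_{2k+1}. Then v_{k+1}*u_{k+1} ≠ 0. -/
/-!
Write `N = A - λ₀`. The Jordan chain relations make `u_i* v_j` depend only on `i + j`, so
`u_{k+1}* v_{k+1} = u_1* v_{2k+1}`. Since `N` has rank `n - 1` and `u_1* N = 0`, the range of `N`
is exactly the orthogonal complement of `u_1`. If `u_1* v_{2k+1}` vanished, then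
`v_{2k+1} = N w` for some `w`, and `w, N w, …, N^{2k+1} w = v_1` would be a Jordan chain of
length `2k+2` at `λ₀`, exceeding the algebraic multiplicity `2k+1`.
-/

open Matrix Module LinearMap

section SubSmulOne

variable {R ι : Type*} [CommRing R] [Fintype ι] [DecidableEq ι]

theorem vecMul_sub_smul_one (x : ι → R) (A : Matrix ι ι R) (c : R) :
    x ᵥ* (A - c • 1) = x ᵥ* A - c • x := by
  rw [vecMul_sub, smul_one_eq_diagonal, vecMul_diagonal_const, op_smul_eq_smul]

theorem sub_smul_one_mulVec (A : Matrix ι ι R) (c : R) (x : ι → R) :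
    (A - c • 1) *ᵥ x = A *ᵥ x - c • x := by
  rw [sub_mulVec, smul_one_eq_diagonal, diagonal_const_mulVec]

theorem mulVecLin_sub_smul_one (A : Matrix ι ι R) (c : R) :
    (A - c • 1).mulVecLin = A.mulVecLin - c • 1 :=
  LinearMap.ext (sub_smul_one_mulVec A c)

end SubSmulOne

theorem range_mulVecLin_eq_ker_dotProduct {K ι : Type*} [Field K] [Fintype ι] [DecidableEq ι]
    {N : Matrix ι ι K} (hN : finrank K (ker N.mulVecLin) = 1) {x : ι → K} (hx : x ≠ 0)
    (hxN : x ᵥ* N = 0) :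
    range N.mulVecLin = ker (dotProductEquiv K ι x) := by
  have hle : range N.mulVecLin ≤ ker (dotProductEquiv K ι x) := by
    rintro _ ⟨y, rfl⟩
    simp [dotProduct_mulVec, hxN]
  have hne : ker (dotProductEquiv K ι x) ≠ ⊤ := fun h =>
    hx ((dotProductEquiv K ι).map_eq_zero_iff.mp (LinearMap.ker_eq_top.mp h))
  refine Submodule.eq_of_le_of_finrank_le hle ?_
  have := Submodule.finrank_lt hne
  have := LinearMap.finrank_range_add_finrank_ker N.mulVecLin
  simp only [finrank_fintype_fun_eq_card] at *
  omega

theorem dotProduct_eq_of_jordanChains {R ι : Type*} [CommSemiring R] [Fintype ι]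
    {N : Matrix ι ι R} {a b : ℕ → ι → R} {m : ℕ}
    (ha : ∀ i, 1 ≤ i → i + 1 ≤ m → a (i + 1) ᵥ* N = a i)
    (hb : ∀ j, 1 ≤ j → j + 1 ≤ m → N *ᵥ b (j + 1) = b j) {i j t : ℕ}
    (hi : 1 ≤ i) (hj : 1 ≤ j) (hit : i + t ≤ m) (hjt : j + t ≤ m) :
    a (i + t) ⬝ᵥ b j = a i ⬝ᵥ b (j + t) := by
  induction t generalizing i with
  | zero => rfl
  | succ t ih =>
    calc a (i + (t + 1)) ⬝ᵥ b j = a (i + 1 + t) ⬝ᵥ b j := by rw [add_right_comm, add_assoc]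
      _ = a (i + 1) ⬝ᵥ N *ᵥ b (j + t + 1) := by
        rw [ih (by omega) (by omega) (by omega), hb _ (by omega) (by omega)]
      _ = a i ⬝ᵥ b (j + (t + 1)) := by
        rw [dotProduct_mulVec, ha i hi (by omega), add_assoc]

theorem pow_apply_eq_of_jordanChain {R V : Type*} [Semiring R] [AddCommMonoid V] [Module R V]
    {g : Module.End R V} {b : ℕ → V} {m : ℕ}
    (hb : ∀ j, 1 ≤ j → j + 1 ≤ m → g (b (j + 1)) = b j) {w : V} (hw : g w = b m) :
    ∀ t, t < m → (g ^ (t + 1)) w = b (m - t)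
  | 0, _ => by simpa using hw
  | t + 1, ht => by
    rw [pow_succ', Module.End.mul_apply, pow_apply_eq_of_jordanChain hb hw t (by omega),
      ← hb (m - (t + 1)) (by omega) (by omega)]
    congr 2
    omega

theorem le_finrank_ker_pow {K V : Type*} [DivisionRing K] [AddCommGroup V] [Module K V]
    [FiniteDimensional K V] {g : Module.End K V} {x : V} {m : ℕ}
    (hm : (g ^ m) x ≠ 0) (hm1 : (g ^ (m + 1)) x = 0) :
    m + 1 ≤ finrank K (ker (g ^ (m + 1))) := by
  suffices ∀ i ≤ m + 1, i ≤ finrank K (ker (g ^ i)) from this _ le_rfl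
  intro i
  induction i with
  | zero => simp
  | succ i ih =>
    intro hi
    have hlt : ker (g ^ i) < ker (g ^ (i + 1)) := by
      refine SetLike.lt_iff_le_and_exists.mpr ⟨g.iterateKer.monotone i.le_succ,
        (g ^ (m - i)) x, ?_, ?_⟩
      · rw [mem_ker, ← Module.End.mul_apply, ← pow_add, show i + 1 + (m - i) = m + 1 by omega,
          hm1]
      · rw [mem_ker, ← Module.End.mul_apply, ← pow_add, show i + (m - i) = m by omega]
        exact hm
    exact (ih (by omega)).trans_lt (Submodule.finrank_lt_finrank_of_lt hlt)

/-- For an eigenvalue of algebraic multiplicity `2k+1` and geometric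
multiplicity `1`, the middle chain vectors are not orthogonal:
`v_{k+1}* u_{k+1} ≠ 0`. -/
theorem middle_vectors_not_orthogonal {n k : ℕ}
    (A : Matrix (Fin n) (Fin n) ℂ) (lam0 : ℂ)
    (u v : ℕ → Fin n → ℂ)
    (halg : (Matrix.charpoly A).rootMultiplicity lam0 = 2 * k + 1)
    (hgeo : Module.finrank ℂ
      ↥(LinearMap.ker ((A - lam0 • (1 : Matrix (Fin n) (Fin n) ℂ)).mulVecLin)) = 1)
    (hu0 : u 1 ≠ 0) (hv0 : v 1 ≠ 0)
    (hu1 : Matrix.vecMul (star (u 1)) A = lam0 • star (u 1))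
    (huS : ∀ i, 1 ≤ i → i + 1 ≤ 2 * k + 1 →
      Matrix.vecMul (star (u (i + 1))) A = lam0 • star (u (i + 1)) + star (u i))
    (hv1 : A.mulVec (v 1) = lam0 • v 1)
    (hvS : ∀ j, 1 ≤ j → j + 1 ≤ 2 * k + 1 →
      A.mulVec (v (j + 1)) = lam0 • v (j + 1) + v j) :
    dotProduct (star (v (k + 1))) (u (k + 1)) ≠ 0 := by
  set N := A - lam0 • (1 : Matrix (Fin n) (Fin n) ℂ)
  have huN : ∀ i, 1 ≤ i → i + 1 ≤ 2 * k + 1 → star (u (i + 1)) ᵥ* N = star (u i) :=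
    fun i hi hik => by rw [vecMul_sub_smul_one, huS i hi hik, add_sub_cancel_left]
  have hvN : ∀ j, 1 ≤ j → j + 1 ≤ 2 * k + 1 → N *ᵥ v (j + 1) = v j :=
    fun j hj hjk => by rw [sub_smul_one_mulVec, hvS j hj hjk, add_sub_cancel_left]
  have hmiddle : star (u (k + 1)) ⬝ᵥ v (k + 1) = star (u 1) ⬝ᵥ v (2 * k + 1) := by
    have := dotProduct_eq_of_jordanChains (a := fun i => star (u i)) huN hvN
      (i := 1) (j := k + 1) (t := k) le_rfl (by omega) (by omega) (by omega)
    rwa [add_comm 1 k, show k + 1 + k = 2 * k + 1 by ring] at this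
  rw [star_dotProduct, star_ne_zero, hmiddle]
  intro hzero
  obtain ⟨w, hw⟩ : v (2 * k + 1) ∈ range N.mulVecLin := by
    rw [range_mulVecLin_eq_ker_dotProduct hgeo (star_ne_zero.mpr hu0)
      (by rw [vecMul_sub_smul_one, hu1, sub_self])]
    exact hzero
  have hw1 : (N.mulVecLin ^ (2 * k + 1)) w = v 1 := by
    simpa using pow_apply_eq_of_jordanChain hvN hw (2 * k) (by omega)
  have hlong : 2 * k + 2 ≤
      finrank ℂ (Module.End.genEigenspace A.mulVecLin lam0 ((2 * k + 2 : ℕ) : ℕ∞)) := by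
    rw [Module.End.genEigenspace_nat, ← mulVecLin_sub_smul_one]
    refine le_finrank_ker_pow (hw1 ▸ hv0) ?_
    rw [pow_succ', Module.End.mul_apply, hw1, mulVecLin_apply, sub_smul_one_mulVec, hv1,
      sub_self]
  have hshort := LinearMap.finrank_genEigenspace_le A.mulVecLin lam0 (2 * k + 2)
  rw [charpoly_mulVecLin, halg] at hshort
  omega
end
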